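/- For Δ ∈ ℝ with Δ ≢ 3π/4 and Δ ≢ −π/4 (mod 2π), let Û(k) = diag(e^{ik}, e^{−ik}, e^{ik}, e^{−ik})·M̃(Δ), p = (cosΔ − sinΔ)/√2, and let λ be either of p·cos(k) ± i√(1 − p²cos²(k)). Define x₁ = λe^{ik} + √2·sinΔ, x₂ = λ⁻¹e^{−ik} − √2·cosΔ, x₃ = λ⁻¹e^{ik} + √2·sinΔ, x₄ = λe^{−ik} − √2·cosΔ, and v = (x₁x₂x₃, x̄₁x₃x₄, x₁x₂x̄₄, x₂x₃x₄)ᵀ ∈ ℂ⁴, where x̄ denotes complex conjugation. Then Û(k)·v = λ·v, i.e., v is an eigenvector of Û(k) associated with the eigenvalue λ. -/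

import Mathlib

open Matrix Real

noncomputable section

/-- The coin matrix `M̃(Δ)` of the one-parameter family of 4-state Grover walks. -/
def MtildeGrover (Δ : ℝ) : Matrix (Fin 4) (Fin 4) ℝ :=
  (Real.sqrt 2)⁻¹ •
    !![Real.cos Δ, Real.sin Δ, -Real.cos Δ, Real.sin Δ;
       Real.sin Δ, Real.cos Δ, Real.sin Δ, -Real.cos Δ;
       Real.sin Δ, -Real.cos Δ, -Real.sin Δ, -Real.cos Δ;
       -Real.cos Δ, Real.sin Δ, -Real.cos Δ, -Real.sin Δ]

/-- The Fourier-space evolution matrix `Û(k) = diag(e^{ik}, e^{−ik}, e^{ik}, e^{−ik})·M̃(Δ)`. -/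
def UhatGrover (Δ : ℝ) (k : ℝ) : Matrix (Fin 4) (Fin 4) ℂ :=
  Matrix.diagonal
      ![Complex.exp ((k : ℂ) * Complex.I), Complex.exp (-(k : ℂ) * Complex.I),
        Complex.exp ((k : ℂ) * Complex.I), Complex.exp (-(k : ℂ) * Complex.I)] *
    (MtildeGrover Δ).map (fun r => (r : ℂ))

/-- `x₁ = λe^{ik} + √2·sinΔ`. -/
def ev1 (Δ k : ℝ) (lam : ℂ) : ℂ :=
  lam * Complex.exp ((k : ℂ) * Complex.I) + (Real.sqrt 2 : ℂ) * (Real.sin Δ : ℂ)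

/-- `x₂ = λ⁻¹e^{−ik} − √2·cosΔ`. -/
def ev2 (Δ k : ℝ) (lam : ℂ) : ℂ :=
  lam⁻¹ * Complex.exp (-(k : ℂ) * Complex.I) - (Real.sqrt 2 : ℂ) * (Real.cos Δ : ℂ)

/-- `x₃ = λ⁻¹e^{ik} + √2·sinΔ`. -/
def ev3 (Δ k : ℝ) (lam : ℂ) : ℂ :=
  lam⁻¹ * Complex.exp ((k : ℂ) * Complex.I) + (Real.sqrt 2 : ℂ) * (Real.sin Δ : ℂ)

/-- `x₄ = λe^{−ik} − √2·cosΔ`. -/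
def ev4 (Δ k : ℝ) (lam : ℂ) : ℂ :=
  lam * Complex.exp (-(k : ℂ) * Complex.I) - (Real.sqrt 2 : ℂ) * (Real.cos Δ : ℂ)

/-! With `g = √2 cos Δ` and `s = √2 sin Δ` one has `2 Û(k) = D · N(g, s)`, where
`D = diag(e^{ik}, e^{-ik}, e^{ik}, e^{-ik})` and `N` has entries `±g, ±s`. In each row of
`D N v = 2λ v` the combinations `v₀ ∓ v₂` and `v₁ ± v₃` factor, and modulo `g² + s² = 2` the row
becomes one of two identities saying that a cubic expression in `λ, λ⁻¹` is invariant under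
`λ ↔ λ⁻¹`. Its antisymmetric part is `(λ - λ⁻¹)` times a polynomial that vanishes because
`λ λ⁻¹ = 1` and `2(λ + λ⁻¹) = (g - s)(e^{ik} + e^{-ik})`; the latter is the eigenvalue
equation, and holds because `|λ| = 1` and `Re λ = p cos k`. -/

section GroverAlgebra

variable {R : Type*} [CommRing R]

/-- `√2 · M̃(Δ)`, written with `g = √2 cos Δ` and `s = √2 sin Δ`. -/
def scaledCoin (g s : R) : Matrix (Fin 4) (Fin 4) R :=
  !![g, s, -g, s;
     s, g, s, -g;
     s, -g, -s, -g;
     -g, s, -g, -s]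

/-- With `L = λ`, `M = λ⁻¹ = λ̄`, `a = e^{ik}`, `b = e^{-ik}`, `g = √2 cos Δ`, `s = √2 sin Δ`,
the factors are `x₁ = La + s`, `x₂ = Mb - g`, `x₃ = Ma + s`, `x₄ = Lb - g`, `x̄₁ = Mb + s`
and `x̄₄ = Ma - g`. -/
def groverEigvec (L M a b g s : R) : Fin 4 → R :=
  ![(L * a + s) * (M * b - g) * (M * a + s),
    (M * b + s) * (M * a + s) * (L * b - g),
    (L * a + s) * (M * b - g) * (M * a - g),
    (M * b - g) * (M * a + s) * (L * b - g)]

variable {L M a b g s : R}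

theorem swap_identity_even_rows (hLM : L * M = 1) (hab : a * b = 1) (hgs : g ^ 2 + s ^ 2 = 2)
    (hsum : 2 * (L + M) = (g - s) * (a + b)) :
    (M * a + s) * (L * b - g) * (2 * M * b + s - g) =
      (L * a + s) * (M * b - g) * (2 * L * b + s - g) := by
  linear_combination (L - M) * (b * hgs - 2 * a * b ^ 2 * hLM - 2 * b * hab
    + 2 * g * (L + M) * hab + g * hsum)

theorem swap_identity_odd_rows (hLM : L * M = 1) (hab : a * b = 1) (hgs : g ^ 2 + s ^ 2 = 2)
    (hsum : 2 * (L + M) = (g - s) * (a + b)) :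
    (L * a + s) * (M * b - g) * (2 * M * a + s - g) =
      (M * a + s) * (L * b - g) * (2 * L * a + s - g) := by
  linear_combination (L - M) * (a * hgs - 2 * a ^ 2 * b * hLM - 2 * a * hab
    - 2 * s * (L + M) * hab - s * hsum)

theorem scaledCoin_mulVec_groverEigvec (hLM : L * M = 1) (hab : a * b = 1)
    (hgs : g ^ 2 + s ^ 2 = 2) (hsum : 2 * (L + M) = (g - s) * (a + b)) :
    (diagonal ![a, b, a, b] * scaledCoin g s) *ᵥ groverEigvec L M a b g s =
      (2 * L) • groverEigvec L M a b g s := by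
  have even_rows := swap_identity_even_rows hLM hab hgs hsum
  have odd_rows := swap_identity_odd_rows hLM hab hgs hsum
  ext i
  fin_cases i <;>
    simp only [mulVec, dotProduct, Fin.sum_univ_four, diagonal_mul, scaledCoin, groverEigvec,
      of_apply, cons_val', cons_val_zero, cons_val_one, cons_val_two, cons_val_three,
      empty_val', cons_val_fin_one, tail_cons, Pi.smul_apply, smul_eq_mul, Fin.zero_eta,
      Fin.mk_one, Fin.reduceFinMk, Fin.isValue, vecHead]
  · linear_combination a * s * even_rows + (L * a + s) * (M * b - g) *
      (a * hgs - 2 * a * hLM + 2 * s * L * hab)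
  · linear_combination b * s * odd_rows + (M * a + s) * (L * b - g) *
      (b * hgs - 2 * b * hLM + 2 * s * L * hab)
  · linear_combination -a * g * even_rows + (L * a + s) * (M * b - g) *
      (a * hgs - 2 * a * hLM - 2 * g * L * hab)
  · linear_combination -b * g * odd_rows + (M * a + s) * (L * b - g) *
      (b * hgs - 2 * b * hLM - 2 * g * L * hab)

end GroverAlgebra

open Complex

theorem ofReal_sqrt_two_sq : ((√2 : ℝ) : ℂ) ^ 2 = 2 := by
  exact_mod_cast Real.sq_sqrt zero_le_two

theorem ofReal_sqrt_two_ne_zero : ((√2 : ℝ) : ℂ) ≠ 0 := by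
  exact_mod_cast (Real.sqrt_pos.2 two_pos).ne'

theorem sqrt_two_mul_cos_sq_add_sqrt_two_mul_sin_sq (Δ : ℝ) :
    ((√2 : ℝ) * (Real.cos Δ : ℂ)) ^ 2 + ((√2 : ℝ) * (Real.sin Δ : ℂ)) ^ 2 = 2 := by
  have hcs : (Real.cos Δ : ℂ) ^ 2 + (Real.sin Δ : ℂ) ^ 2 = 1 := by
    exact_mod_cast Real.cos_sq_add_sin_sq Δ
  linear_combination ((Real.cos Δ : ℂ) ^ 2 + (Real.sin Δ : ℂ) ^ 2) * ofReal_sqrt_two_sq + 2 * hcs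

theorem sq_cos_sub_sin_div_sqrt_two_le_one (Δ : ℝ) :
    ((Real.cos Δ - Real.sin Δ) / √2) ^ 2 ≤ 1 := by
  rw [div_pow, Real.sq_sqrt zero_le_two, div_le_one two_pos]
  nlinarith [Real.sin_sq_add_cos_sq Δ, sq_nonneg (Real.cos Δ + Real.sin Δ)]

theorem norm_eq_one_of_eq_add_sqrt_mul_I {x : ℝ} (hx : x ^ 2 ≤ 1) {z : ℂ}
    (hz : z = x + √(1 - x ^ 2) * I ∨ z = x - √(1 - x ^ 2) * I) : ‖z‖ = 1 := by
  have hsqrt : √(1 - x ^ 2) * √(1 - x ^ 2) = 1 - x ^ 2 := Real.mul_self_sqrt (by linarith)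
  rw [norm_def, Real.sqrt_eq_one]
  rcases hz with rfl | rfl <;> simp [normSq_apply, hsqrt] <;> ring

theorem re_eq_of_eq_add_sqrt_mul_I {x : ℝ} {z : ℂ}
    (hz : z = x + √(1 - x ^ 2) * I ∨ z = x - √(1 - x ^ 2) * I) : z.re = x := by
  rcases hz with rfl | rfl <;> simp

theorem two_mul_add_inv_eq {Δ k : ℝ} {z : ℂ} (hz : ‖z‖ = 1)
    (hre : z.re = (Real.cos Δ - Real.sin Δ) / √2 * Real.cos k) :
    2 * (z + z⁻¹) = ((√2 : ℝ) * (Real.cos Δ : ℂ) - (√2 : ℝ) * (Real.sin Δ : ℂ)) *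
      (exp (k * I) + exp (-k * I)) := by
  rw [inv_eq_conj hz, add_conj, hre, ← two_cos, ← ofReal_cos]
  simp only [ofReal_mul, ofReal_div, ofReal_sub, ofReal_ofNat]
  field_simp [ofReal_sqrt_two_ne_zero]
  rw [ofReal_sqrt_two_sq]
  ring

theorem uhatGrover_eq (Δ k : ℝ) :
    UhatGrover Δ k = (2⁻¹ : ℂ) •
      (diagonal ![exp (k * I), exp (-k * I), exp (k * I), exp (-k * I)] *
        scaledCoin ((√2 : ℝ) * (Real.cos Δ : ℂ)) ((√2 : ℝ) * (Real.sin Δ : ℂ))) := by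
  have hsqrt : ((√2 : ℝ) : ℂ)⁻¹ = 2⁻¹ * (√2 : ℝ) := by
    field_simp [ofReal_sqrt_two_ne_zero]
    linear_combination -ofReal_sqrt_two_sq
  rw [UhatGrover, ← mul_smul_comm]
  congr 2
  ext i j
  fin_cases i <;> fin_cases j <;> simp [MtildeGrover, scaledCoin, hsqrt] <;> ring

theorem uhat_grover_eigenvector_general (Δ k : ℝ)
    (lam : ℂ)
    (hlam :
      lam = ((((Real.cos Δ - Real.sin Δ) / Real.sqrt 2) * Real.cos k : ℝ) : ℂ)
              + (Real.sqrt (1 - ((Real.cos Δ - Real.sin Δ) / Real.sqrt 2) ^ 2 * Real.cos k ^ 2) : ℂ)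
                * Complex.I ∨
      lam = ((((Real.cos Δ - Real.sin Δ) / Real.sqrt 2) * Real.cos k : ℝ) : ℂ)
              - (Real.sqrt (1 - ((Real.cos Δ - Real.sin Δ) / Real.sqrt 2) ^ 2 * Real.cos k ^ 2) : ℂ)
                * Complex.I) :
    (UhatGrover Δ k).mulVec
        ![ev1 Δ k lam * ev2 Δ k lam * ev3 Δ k lam,
          (starRingEnd ℂ) (ev1 Δ k lam) * ev3 Δ k lam * ev4 Δ k lam,
          ev1 Δ k lam * ev2 Δ k lam * (starRingEnd ℂ) (ev4 Δ k lam),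
          ev2 Δ k lam * ev3 Δ k lam * ev4 Δ k lam]
      = lam • ![ev1 Δ k lam * ev2 Δ k lam * ev3 Δ k lam,
          (starRingEnd ℂ) (ev1 Δ k lam) * ev3 Δ k lam * ev4 Δ k lam,
          ev1 Δ k lam * ev2 Δ k lam * (starRingEnd ℂ) (ev4 Δ k lam),
          ev2 Δ k lam * ev3 Δ k lam * ev4 Δ k lam] := by
  have hx : ((Real.cos Δ - Real.sin Δ) / √2 * Real.cos k) ^ 2 ≤ 1 := by
    rw [mul_pow]
    exact mul_le_one₀ (sq_cos_sub_sin_div_sqrt_two_le_one Δ) (sq_nonneg _) (Real.cos_sq_le_one k)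
  rw [← mul_pow] at hlam
  have hnorm := norm_eq_one_of_eq_add_sqrt_mul_I hx hlam
  have hconj : (starRingEnd ℂ) lam = lam⁻¹ := (inv_eq_conj hnorm).symm
  have hexp_conj : (starRingEnd ℂ) (exp (k * I)) = exp (-k * I) := by rw [← exp_conj]; simp
  have hexp_neg_conj : (starRingEnd ℂ) (exp (-k * I)) = exp (k * I) := by rw [← exp_conj]; simp
  have hv : ![ev1 Δ k lam * ev2 Δ k lam * ev3 Δ k lam,
      (starRingEnd ℂ) (ev1 Δ k lam) * ev3 Δ k lam * ev4 Δ k lam,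
      ev1 Δ k lam * ev2 Δ k lam * (starRingEnd ℂ) (ev4 Δ k lam),
      ev2 Δ k lam * ev3 Δ k lam * ev4 Δ k lam] =
      groverEigvec lam lam⁻¹ (exp (k * I)) (exp (-k * I))
        ((√2 : ℝ) * (Real.cos Δ : ℂ)) ((√2 : ℝ) * (Real.sin Δ : ℂ)) := by
    simp only [groverEigvec, ev1, ev2, ev3, ev4, map_add, map_sub, map_mul, hconj, hexp_conj,
      hexp_neg_conj, conj_ofReal]
  have hlam0 : lam ≠ 0 := norm_ne_zero_iff.1 (hnorm ▸ one_ne_zero)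
  have hexp : exp (k * I) * exp (-k * I) = 1 := by rw [← Complex.exp_add]; simp
  rw [hv, uhatGrover_eq, smul_mulVec,
    scaledCoin_mulVec_groverEigvec (mul_inv_cancel₀ hlam0) hexp
      (sqrt_two_mul_cos_sq_add_sqrt_two_mul_sin_sq Δ)
      (two_mul_add_inv_eq hnorm (re_eq_of_eq_add_sqrt_mul_I hlam)),
    smul_smul, ← mul_assoc, inv_mul_cancel₀ two_ne_zero, one_mul]

/-- `v = (x₁x₂x₃, x̄₁x₃x₄, x₁x₂x̄₄, x₂x₃x₄)ᵀ` is an eigenvector of `Û(k)` associated with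
either nontrivial eigenvalue `λ = p·cos(k) ± i√(1 − p²cos²(k))`, provided
`Δ ≢ 3π/4` and `Δ ≢ −π/4 (mod 2π)`. -/
theorem uhat_grover_eigenvector (Δ k : ℝ)
    (hΔ : ∀ m : ℤ, Δ ≠ 3 * π / 4 + 2 * π * m ∧ Δ ≠ -π / 4 + 2 * π * m)
    (lam : ℂ)
    (hlam :
      lam = ((((Real.cos Δ - Real.sin Δ) / Real.sqrt 2) * Real.cos k : ℝ) : ℂ)
              + (Real.sqrt (1 - ((Real.cos Δ - Real.sin Δ) / Real.sqrt 2) ^ 2 * Real.cos k ^ 2) : ℂ)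
                * Complex.I ∨
      lam = ((((Real.cos Δ - Real.sin Δ) / Real.sqrt 2) * Real.cos k : ℝ) : ℂ)
              - (Real.sqrt (1 - ((Real.cos Δ - Real.sin Δ) / Real.sqrt 2) ^ 2 * Real.cos k ^ 2) : ℂ)
                * Complex.I) :
    (UhatGrover Δ k).mulVec
        ![ev1 Δ k lam * ev2 Δ k lam * ev3 Δ k lam,
          (starRingEnd ℂ) (ev1 Δ k lam) * ev3 Δ k lam * ev4 Δ k lam,
          ev1 Δ k lam * ev2 Δ k lam * (starRingEnd ℂ) (ev4 Δ k lam),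
          ev2 Δ k lam * ev3 Δ k lam * ev4 Δ k lam]
      = lam • ![ev1 Δ k lam * ev2 Δ k lam * ev3 Δ k lam,
          (starRingEnd ℂ) (ev1 Δ k lam) * ev3 Δ k lam * ev4 Δ k lam,
          ev1 Δ k lam * ev2 Δ k lam * (starRingEnd ℂ) (ev4 Δ k lam),
          ev2 Δ k lam * ev3 Δ k lam * ev4 Δ k lam] :=
  uhat_grover_eigenvector_general Δ k lam hlam
end
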